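/- For all n ≥ 2, the number of permutations of {1,...,n} avoiding the patterns 132, 2341, 3241, and 3412 equals 3·2^{n-2} - 1. -/

import Mathlib

/-- A function `π : Fin n → Fin n` contains the pattern `p : Fin k → ℕ` if there is a
strictly increasing choice of indices whose images under `π` have the same pairwise
order relations as the entries of `p`. -/
def Contains {n k : ℕ} (π : Fin n → Fin n) (p : Fin k → ℕ) : Prop :=
  ∃ f : Fin k → Fin n, StrictMono f ∧ ∀ i j, p i < p j ↔ π (f i) < π (f j)

/-- `π` avoids the pattern `p`. -/
def Avoids {n k : ℕ} (π : Fin n → Fin n) (p : Fin k → ℕ) : Prop := ¬ Contains π p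

/-- The set of permutations of `Fin n` avoiding the patterns 132, 2341 and 3241,
i.e. the 132-avoiding two-stack sortable permutations. -/
def TSS132 (n : ℕ) : Set (Fin n → Fin n) :=
  {π | Function.Bijective π ∧ Avoids π ![1,3,2] ∧ Avoids π ![2,3,4,1] ∧ Avoids π ![3,2,4,1]}

/-- The Pell numbers. -/
def pell : ℕ → ℕ
  | 0 => 0
  | 1 => 1
  | n+2 => 2 * pell (n+1) + pell n

/-!
Let `π` avoid 132, 2341, 3241 and 3412, of length `n + 1 ≥ 3`. None of the four patterns begins
or ends with its maximum, so inserting a new maximum at the front or at the back of an avoider of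
length `n` gives an avoider, and deleting a maximum sitting at either end gives one back. If the
maximum of `π` is interior, 132-avoidance puts every entry before it above every entry after it;
2341 and 3241 then force the maximum into the second position, and 3412 forces everything after it
to decrease, so `π = n (n+1) (n-1) ⋯ 1`. Hence the number `a n` of avoiders of length `n`
satisfies `a (n + 1) = 2 a n + 1` for `n ≥ 2`, and `a 2 = 2`.
-/

open Function

variable {k m n : ℕ}

section Patterns

variable {π : Fin n → Fin n}

lemma contains_132 {a b c : Fin n} (hab : a < b) (hbc : b < c)
    (h1 : π a < π c) (h2 : π c < π b) : Contains π ![1,3,2] := by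
  refine ⟨![a, b, c], Fin.strictMono_iff_lt_succ.2 ?_, ?_⟩
  · simp [Fin.forall_fin_succ, hab, hbc]
  · simp [Fin.forall_fin_succ]
    and_intros <;> order

lemma contains_2341 {a b c d : Fin n} (hab : a < b) (hbc : b < c) (hcd : c < d)
    (h1 : π d < π a) (h2 : π a < π b) (h3 : π b < π c) : Contains π ![2,3,4,1] := by
  refine ⟨![a, b, c, d], Fin.strictMono_iff_lt_succ.2 ?_, ?_⟩
  · simp [Fin.forall_fin_succ, hab, hbc, hcd]
  · simp [Fin.forall_fin_succ]
    and_intros <;> order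

lemma contains_3241 {a b c d : Fin n} (hab : a < b) (hbc : b < c) (hcd : c < d)
    (h1 : π d < π b) (h2 : π b < π a) (h3 : π a < π c) : Contains π ![3,2,4,1] := by
  refine ⟨![a, b, c, d], Fin.strictMono_iff_lt_succ.2 ?_, ?_⟩
  · simp [Fin.forall_fin_succ, hab, hbc, hcd]
  · simp [Fin.forall_fin_succ]
    and_intros <;> order

lemma contains_3412 {a b c d : Fin n} (hab : a < b) (hbc : b < c) (hcd : c < d)
    (h1 : π c < π d) (h2 : π d < π a) (h3 : π a < π b) : Contains π ![3,4,1,2] := by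
  refine ⟨![a, b, c, d], Fin.strictMono_iff_lt_succ.2 ?_, ?_⟩
  · simp [Fin.forall_fin_succ, hab, hbc, hcd]
  · simp [Fin.forall_fin_succ]
    and_intros <;> order

lemma Avoids.apply_lt_apply_of_132 (h : Avoids π ![1,3,2]) (hπ : Injective π) {p i q : Fin n}
    (hpi : p < i) (hiq : i < q) (hq : π q < π i) : π q < π p :=
  (lt_or_gt_of_ne (hπ.ne (hpi.trans hiq).ne')).resolve_right
    fun hlt => h (contains_132 hpi hiq hlt hq)

lemma avoids_of_lt {p : Fin k → ℕ} (hnk : n < k) : Avoids π p := fun ⟨f, hf, _⟩ =>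
  hnk.not_ge (by simpa using Fintype.card_le_of_injective f hf.injective)

end Patterns

section NonInversions

def nonInversions {α : Type*} [LT α] (p : Fin k → α) : Set (Fin k × Fin k) :=
  {q | q.1 < q.2 ∧ p q.1 < p q.2}

lemma Contains.subsingleton_nonInversions {π : Fin n → Fin n} {p : Fin k → ℕ}
    (h : Contains π p) (hπ : (nonInversions π).Subsingleton) :
    (nonInversions p).Subsingleton := by
  obtain ⟨f, hf, hfp⟩ := h
  rintro ⟨i, j⟩ ⟨hij, hp⟩ ⟨i', j'⟩ ⟨hij', hp'⟩
  have := hπ (show (f i, f j) ∈ nonInversions π from ⟨hf hij, (hfp i j).1 hp⟩)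
    (show (f i', f j') ∈ nonInversions π from ⟨hf hij', (hfp i' j').1 hp'⟩)
  simp only [Prod.mk.injEq, hf.injective.eq_iff] at this
  rw [this.1, this.2]

end NonInversions

section InsertMax

variable {p : Fin k → ℕ} {σ : Fin m → Fin m} {x : Fin (m+1)}

def insertMax (x : Fin (m+1)) (σ : Fin m → Fin m) : Fin (m+1) → Fin (m+1) :=
  Fin.insertNth x (Fin.last m) (Fin.castSucc ∘ σ)

@[simp]
lemma insertMax_apply_self : insertMax x σ x = Fin.last m :=
  Fin.insertNth_apply_same _ _ _

@[simp]
lemma insertMax_apply_succAbove (i : Fin m) : insertMax x σ (x.succAbove i) = (σ i).castSucc :=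
  Fin.insertNth_apply_succAbove _ _ _ _

lemma insertMax_eq_last_iff {y : Fin (m+1)} : insertMax x σ y = Fin.last m ↔ y = x := by
  obtain rfl | ⟨i, rfl⟩ := Fin.eq_self_or_eq_succAbove x y
  · simp
  · simp [(Fin.castSucc_lt_last _).ne, Fin.succAbove_ne]

lemma insertMax_injective (hσ : Injective σ) : Injective (insertMax x σ) := by
  intro y z h
  obtain rfl | ⟨i, rfl⟩ := Fin.eq_self_or_eq_succAbove x y
  · exact (insertMax_eq_last_iff.1 (h.symm.trans insertMax_apply_self)).symm
  obtain rfl | ⟨j, rfl⟩ := Fin.eq_self_or_eq_succAbove x z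
  · exact insertMax_eq_last_iff.1 (h.trans insertMax_apply_self)
  simp only [insertMax_apply_succAbove, Fin.castSucc_inj] at h
  rw [hσ h]

lemma insertMax_right_injective : Injective (insertMax x) := fun σ τ h =>
  funext fun i => Fin.castSucc_injective _ <| by
    simpa using congrFun h (x.succAbove i)

lemma contains_insertMax (h : Contains σ p) (x : Fin (m+1)) : Contains (insertMax x σ) p := by
  obtain ⟨f, hf, hfp⟩ := h
  refine ⟨x.succAbove ∘ f, (Fin.strictMono_succAbove x).comp hf, fun i j => ?_⟩
  simp [hfp]

lemma Contains.of_insertMax (h : Contains (insertMax x σ) p)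
    (hx : ∀ f : Fin k → Fin (m+1), StrictMono f → ∀ i, f i = x → ∃ j, p i < p j) :
    Contains σ p := by
  obtain ⟨f, hf, hfp⟩ := h
  by_cases hfx : ∃ i, f i = x
  · obtain ⟨i, hi⟩ := hfx
    obtain ⟨j, hj⟩ := hx f hf i hi
    have := (hfp i j).1 hj
    rw [hi, insertMax_apply_self] at this
    exact absurd this (Fin.le_last _).not_gt
  rw [not_exists] at hfx
  choose g hg using fun i => Fin.exists_succAbove_eq (hfx i)
  refine ⟨g, fun a b hab => ?_, fun i j => ?_⟩
  · rw [← (Fin.strictMono_succAbove x).lt_iff_lt, hg, hg]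
    exact hf hab
  · rw [hfp, ← hg, ← hg, insertMax_apply_succAbove, insertMax_apply_succAbove,
      Fin.castSucc_lt_castSucc_iff]

lemma Contains.of_insertMax_of_eq_zero_or_last {p : Fin (k+1) → ℕ}
    (h : Contains (insertMax x σ) p) (hx : x = 0 ∨ x = Fin.last m)
    (h0 : ∃ j, p 0 < p j) (hlast : ∃ j, p (Fin.last k) < p j) : Contains σ p := by
  refine h.of_insertMax fun f hf i hi => ?_
  rcases hx with rfl | rfl
  · obtain rfl : i = 0 := by
      by_contra hne
      exact Fin.not_lt_zero (f 0) (hi ▸ hf (Fin.pos_iff_ne_zero.2 hne))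
    exact h0
  · obtain rfl : i = Fin.last k := by
      by_contra hne
      exact (Fin.le_last (f (Fin.last k))).not_gt (hi ▸ hf (Fin.lt_last_iff_ne_last.2 hne))
    exact hlast

lemma exists_eq_insertMax {π : Fin (m+1) → Fin (m+1)} (hπ : Injective π)
    (hx : π x = Fin.last m) : ∃ σ : Fin m → Fin m, Injective σ ∧ π = insertMax x σ := by
  have hne (i : Fin m) : π (x.succAbove i) ≠ Fin.last m := fun h =>
    Fin.succAbove_ne x i (hπ (h.trans hx.symm))
  refine ⟨fun i => (π (x.succAbove i)).castPred (hne i), fun i j h => ?_, funext fun y => ?_⟩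
  · exact Fin.succAbove_right_injective (hπ (Fin.castPred_inj.1 h))
  · obtain rfl | ⟨i, rfl⟩ := Fin.eq_self_or_eq_succAbove x y <;> simp [hx]

end InsertMax

def avoiders (n : ℕ) : Set (Fin n → Fin n) := {π ∈ TSS132 n | Avoids π ![3,4,1,2]}

lemma mem_avoiders {π : Fin n → Fin n} :
    π ∈ avoiders n ↔ Bijective π ∧ Avoids π ![1,3,2] ∧ Avoids π ![2,3,4,1] ∧
      Avoids π ![3,2,4,1] ∧ Avoids π ![3,4,1,2] := by
  simp only [avoiders, TSS132, Set.mem_ofPred_eq, and_assoc]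

lemma insertMax_mem_avoiders {σ : Fin m → Fin m} (hσ : σ ∈ avoiders m) {x : Fin (m+1)}
    (hx : x = 0 ∨ x = Fin.last m) : insertMax x σ ∈ avoiders (m+1) := by
  obtain ⟨hb, h132, h2341, h3241, h3412⟩ := mem_avoiders.1 hσ
  refine mem_avoiders.2 ⟨Finite.injective_iff_bijective.1 (insertMax_injective hb.injective),
    fun h => h132 ?_, fun h => h2341 ?_, fun h => h3241 ?_, fun h => h3412 ?_⟩ <;>
  exact h.of_insertMax_of_eq_zero_or_last hx (by decide) (by decide)

lemma exists_insertMax_mem_avoiders {π : Fin (m+1) → Fin (m+1)} (hπ : π ∈ avoiders (m+1))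
    {x : Fin (m+1)} (hx : π x = Fin.last m) : ∃ σ ∈ avoiders m, π = insertMax x σ := by
  obtain ⟨hb, h132, h2341, h3241, h3412⟩ := mem_avoiders.1 hπ
  obtain ⟨σ, hσ, rfl⟩ := exists_eq_insertMax hb.injective hx
  exact ⟨σ, mem_avoiders.2 ⟨Finite.injective_iff_bijective.1 hσ, fun h => h132
    (contains_insertMax h x), fun h => h2341 (contains_insertMax h x),
    fun h => h3241 (contains_insertMax h x), fun h => h3412 (contains_insertMax h x)⟩, rfl⟩

/-- In one-line notation, `revSwap n = n (n+1) (n-1) ⋯ 1 0`. -/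
def revSwap (n : ℕ) : Fin (n+2) → Fin (n+2) := fun i => (Equiv.swap 0 1 i).rev

lemma nonInversions_revSwap_subsingleton : (nonInversions (revSwap n)).Subsingleton := by
  refine (Set.subsingleton_singleton (a := ((0, 1) : Fin (n+2) × Fin (n+2)))).anti ?_
  rintro ⟨a, b⟩ ⟨hab, h⟩
  simp only [revSwap, Fin.rev_lt_rev, Equiv.swap_apply_def] at h
  simp only [Set.mem_singleton_iff, Prod.mk.injEq, Fin.ext_iff, Fin.val_zero, Fin.val_one] at h ⊢
  rw [Fin.lt_def] at hab
  dsimp only at hab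
  split_ifs at h <;> simp only [Fin.lt_def, Fin.val_zero, Fin.val_one] at h <;> omega

lemma revSwap_mem_avoiders : revSwap n ∈ avoiders (n+2) := by
  refine mem_avoiders.2 ⟨((Equiv.swap 0 1).trans Fin.revPerm).bijective, ?_, ?_, ?_, ?_⟩ <;>
  refine fun h => Set.not_subsingleton_iff.2 ?_ (h.subsingleton_nonInversions
    nonInversions_revSwap_subsingleton)
  · exact ⟨(0, 1), ⟨by decide, by decide⟩, (0, 2), ⟨by decide, by decide⟩, by decide⟩
  · exact ⟨(0, 1), ⟨by decide, by decide⟩, (0, 2), ⟨by decide, by decide⟩, by decide⟩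
  · exact ⟨(0, 2), ⟨by decide, by decide⟩, (1, 2), ⟨by decide, by decide⟩, by decide⟩
  · exact ⟨(0, 1), ⟨by decide, by decide⟩, (2, 3), ⟨by decide, by decide⟩, by decide⟩

section Decomposition

variable {π : Fin (n+2) → Fin (n+2)}

lemma apply_one_eq_last (hπ : π ∈ avoiders (n+2)) (h0 : π 0 ≠ Fin.last (n+1))
    (hlast : π (Fin.last (n+1)) ≠ Fin.last (n+1)) : π 1 = Fin.last (n+1) := by
  obtain ⟨hb, h132, h2341, h3241, -⟩ := mem_avoiders.1 hπ
  obtain ⟨i, hi⟩ := hb.surjective (Fin.last (n+1))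
  have hlt (y : Fin (n+2)) (hy : y ≠ i) : π y < π i :=
    hi ▸ Fin.lt_last_iff_ne_last.2 fun h => hy (hb.injective (h.trans hi.symm))
  have hi0 : 0 < i := Fin.pos_iff_ne_zero.2 (by rintro rfl; exact h0 hi)
  have hil : i < Fin.last (n+1) := Fin.lt_last_iff_ne_last.2 (by rintro rfl; exact hlast hi)
  rcases lt_trichotomy 1 i with h1i | rfl | hi1
  · have h01 : (0 : Fin (n+2)) < 1 := Fin.zero_lt_one
    have hL0 := h132.apply_lt_apply_of_132 hb.injective hi0 hil (hlt _ hil.ne')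
    have hL1 := h132.apply_lt_apply_of_132 hb.injective h1i hil (hlt _ hil.ne')
    rcases lt_or_gt_of_ne (hb.injective.ne h01.ne) with h | h
    · exact absurd (contains_2341 h01 h1i hil hL0 h (hlt 1 h1i.ne)) h2341
    · exact absurd (contains_3241 h01 h1i hil hL1 h (hlt 0 hi0.ne)) h3241
  · exact hi
  · simp only [Fin.lt_def, Fin.val_zero, Fin.val_one] at hi0 hi1
    omega

lemma apply_lt_apply_of_one_lt (hπ : π ∈ avoiders (n+2)) (h1 : π 1 = Fin.last (n+1))
    {a b : Fin (n+2)} (hab : a < b) (hb1 : 1 < b) : π b < π a := by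
  obtain ⟨hb, h132, -, -, h3412⟩ := mem_avoiders.1 hπ
  have hlt (y : Fin (n+2)) (hy : y ≠ 1) : π y < π 1 :=
    h1 ▸ Fin.lt_last_iff_ne_last.2 fun h => hy (hb.injective (h.trans h1.symm))
  have h01 : (0 : Fin (n+2)) < 1 := Fin.zero_lt_one
  have hb0 : π b < π 0 := h132.apply_lt_apply_of_132 hb.injective h01 hb1 (hlt b hb1.ne')
  rcases lt_trichotomy a 1 with ha1 | rfl | h1a
  · rwa [(Fin.lt_one_iff _).1 ha1]
  · exact hlt b hb1.ne'
  · refine (lt_or_gt_of_ne (hb.injective.ne hab.ne')).resolve_right fun hab' => h3412 ?_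
    exact contains_3412 h01 h1a hab hab' hb0 (hlt 0 h01.ne)

lemma eq_revSwap (hπ : π ∈ avoiders (n+2)) (h0 : π 0 ≠ Fin.last (n+1))
    (hlast : π (Fin.last (n+1)) ≠ Fin.last (n+1)) : π = revSwap n := by
  have h1 := apply_one_eq_last hπ h0 hlast
  have hmono : StrictMono fun y => (π (Equiv.swap 0 1 y)).rev := by
    intro y z hyz
    simp only [Fin.rev_lt_rev]
    by_cases hz : z = 1
    · subst hz
      rw [(Fin.lt_one_iff _).1 hyz, Equiv.swap_apply_left, Equiv.swap_apply_right, h1]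
      exact Fin.lt_last_iff_ne_last.2 h0
    · have hz1 : 1 < z := by
        simp only [Fin.lt_def, Fin.ext_iff, Fin.val_one] at hyz hz ⊢
        omega
      rw [Equiv.swap_apply_of_ne_of_ne (Fin.zero_lt_one.trans hz1).ne' hz]
      refine apply_lt_apply_of_one_lt hπ h1 ?_ hz1
      rw [Equiv.swap_apply_def]
      split_ifs
      exacts [hz1, Fin.zero_lt_one.trans hz1, hyz]
  funext y
  simpa [revSwap, Fin.rev_eq_iff] using congrFun hmono.eq_id (Equiv.swap 0 1 y)

end Decomposition

lemma avoiders_add_two (n : ℕ) :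
    avoiders (n+2) = insertMax (Fin.last (n+1)) '' avoiders (n+1) ∪
      insertMax 0 '' avoiders (n+1) ∪ {revSwap n} := by
  ext π
  refine ⟨fun hπ => ?_, ?_⟩
  · by_cases hlast : π (Fin.last (n+1)) = Fin.last (n+1)
    · obtain ⟨σ, hσ, rfl⟩ := exists_insertMax_mem_avoiders hπ hlast
      exact Or.inl (Or.inl ⟨σ, hσ, rfl⟩)
    by_cases h0 : π 0 = Fin.last (n+1)
    · obtain ⟨σ, hσ, rfl⟩ := exists_insertMax_mem_avoiders hπ h0
      exact Or.inl (Or.inr ⟨σ, hσ, rfl⟩)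
    exact Or.inr (eq_revSwap hπ h0 hlast)
  · rintro ((⟨σ, hσ, rfl⟩ | ⟨σ, hσ, rfl⟩) | rfl)
    exacts [insertMax_mem_avoiders hσ (Or.inr rfl), insertMax_mem_avoiders hσ (Or.inl rfl),
      revSwap_mem_avoiders]

lemma ncard_avoiders_add_three (n : ℕ) :
    (avoiders (n+3)).ncard = 2 * (avoiders (n+2)).ncard + 1 := by
  have apply_eq_last {x : Fin (n+3)} {π} (h : π ∈ insertMax x '' avoiders (n+2)) :
      π x = Fin.last (n+2) := by
    obtain ⟨σ, -, rfl⟩ := h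
    exact insertMax_apply_self
  have h0 : (0 : Fin (n+3)) ≠ Fin.last (n+2) := Fin.last_pos.ne
  have hdisj : Disjoint (insertMax (Fin.last (n+2)) '' avoiders (n+2))
      (insertMax 0 '' avoiders (n+2)) := by
    refine Set.disjoint_left.2 fun π h ⟨σ, _, hσ⟩ => h0 ?_
    rw [← hσ] at h
    exact (insertMax_eq_last_iff.1 (apply_eq_last h)).symm
  have hrev : revSwap (n+1) ∉ insertMax (Fin.last (n+2)) '' avoiders (n+2) ∪
      insertMax 0 '' avoiders (n+2) := by
    rintro (h | h) <;> have := apply_eq_last h <;>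
      simp [revSwap, Fin.ext_iff, Equiv.swap_apply_def] at this
  rw [avoiders_add_two, Set.ncard_union_eq (Set.disjoint_singleton_right.2 hrev),
    Set.ncard_union_eq hdisj, Set.ncard_image_of_injective _ insertMax_right_injective,
    Set.ncard_image_of_injective _ insertMax_right_injective, Set.ncard_singleton]
  ring

lemma ncard_avoiders_two : (avoiders 2).ncard = 2 := by
  have : avoiders 2 = {π | Bijective π} := by
    ext π
    simp only [mem_avoiders, avoids_of_lt (show 2 < 3 by norm_num),
      avoids_of_lt (show 2 < 4 by norm_num), and_true]
    rfl
  rw [this, ← Nat.card_coe_set_eq]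
  calc Nat.card {π : Fin 2 → Fin 2 | Bijective π}
      = Nat.card (Equiv.Perm (Fin 2)) := Nat.card_congr Equiv.bijectiveEquiv
    _ = 2 := by rw [Nat.card_perm, Nat.card_fin]; rfl

lemma ncard_avoiders (m : ℕ) : (avoiders (m+2)).ncard = 3 * 2^m - 1 := by
  induction m with
  | zero => exact ncard_avoiders_two
  | succ m ih =>
    rw [ncard_avoiders_add_three, ih, pow_succ]
    have := m.one_le_two_pow
    omega

theorem stmt_10 (n : ℕ) (hn : 2 ≤ n) :
    Nat.card ↥{π ∈ TSS132 n | Avoids π ![3,4,1,2]} = 3 * 2^(n-2) - 1 := by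
  obtain ⟨m, rfl⟩ := Nat.exists_eq_add_of_le' hn
  rw [Nat.add_sub_cancel]
  exact (Nat.card_coe_set_eq _).trans (ncard_avoiders m)
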